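/- arXiv:2303.17137 — 2 statements merged into one kernel-verified Lean document; each statement's English description precedes it below -/
import Mathlib

section
/- Let R be a real 3×3 rotation matrix and write r_{ij} for the (i,j) entry of M = Rᵀ. Assume r₃₁ = 0 and r₃₂ ≠ 0, and let K be the intrinsic matrix with rows (f_x, 0, c_x), (0, f_y, c_y), (0, 0, 1), where f_x ≠ 0 and f_y ≠ 0. For any horizontal direction d = (x_v, y_v, 0) with y_v ≠ 0, let v_d = π(K (M d)) and v₂ = π(K (M e₂)) be the dehomogenized vanishing points of d and of e₂ = (0,1,0). Then f_x · r₁₁ · ((v_d)₂ − (v₂)₂) = f_y · r₂₁ · ((v_d)₁ − (v₂)₁); that is, the horizon line through the vanishing points has slope (f_y/f_x)(r₂₁/r₁₁) when r₁₁ ≠ 0. -/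
/-! The principal point `(c_x, c_y)` cancels in a difference of two image points, and a
horizontal direction has the same depth ratio as `e₂`: `(M d)₃ = r₃₂ y_v`. Hence
`(v_d − v₂)ᵢ = f · r_{i1} x_v / (r₃₂ y_v)` with `f = f_x` resp. `f_y`, and both sides of the
identity equal `f_x f_y r₁₁ r₂₁ x_v / (r₃₂ y_v)`. -/

open Matrix

/-- Dehomogenization map `π (x, y, z) = (x/z, y/z)`. -/
noncomputable def dehom (v : Fin 3 → ℝ) : Fin 2 → ℝ := ![v 0 / v 2, v 1 / v 2]

lemma intrinsic_mulVec (fx fy cx cy : ℝ) (p : Fin 3 → ℝ) :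
    !![fx, 0, cx; 0, fy, cy; 0, 0, 1] *ᵥ p = ![fx * p 0 + cx * p 2, fy * p 1 + cy * p 2, p 2] := by
  ext i
  fin_cases i <;> simp [mulVec, dotProduct, Fin.sum_univ_three]

lemma dehom_intrinsic_mulVec_sub (fx fy cx cy : ℝ) {p q : Fin 3 → ℝ} (hp : p 2 ≠ 0)
    (hq : q 2 ≠ 0) :
    dehom (!![fx, 0, cx; 0, fy, cy; 0, 0, 1] *ᵥ p) - dehom (!![fx, 0, cx; 0, fy, cy; 0, 0, 1] *ᵥ q)
      = ![fx * (p 0 / p 2 - q 0 / q 2), fy * (p 1 / p 2 - q 1 / q 2)] := by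
  rw [intrinsic_mulVec, intrinsic_mulVec]
  ext i
  fin_cases i <;>
    simp only [dehom, Pi.sub_apply, Fin.zero_eta, Fin.mk_one, cons_val_zero, cons_val_one,
      cons_val, cons_val_fin_one] <;>
    field_simp <;> ring

lemma mulVec_horizontal_two {M : Matrix (Fin 3) (Fin 3) ℝ} (hM : M 2 0 = 0) (x y : ℝ) :
    (M *ᵥ ![x, y, 0]) 2 = M 2 1 * y := by
  simp [mulVec, dotProduct, Fin.sum_univ_three, hM]

lemma mulVec_horizontal_div_sub {M : Matrix (Fin 3) (Fin 3) ℝ} (hM : M 2 0 = 0)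
    (hM21 : M 2 1 ≠ 0) {y : ℝ} (hy : y ≠ 0) (x : ℝ) (i : Fin 3) :
    (M *ᵥ ![x, y, 0]) i / (M *ᵥ ![x, y, 0]) 2 - (M *ᵥ ![0, 1, 0]) i / (M *ᵥ ![0, 1, 0]) 2
      = M i 0 * x / (M 2 1 * y) := by
  rw [mulVec_horizontal_two hM, mulVec_horizontal_two hM]
  simp only [mulVec, dotProduct, Fin.sum_univ_three, cons_val_zero, cons_val_one, cons_val,
    mul_zero, add_zero, mul_one, zero_add]
  field_simp
  ring

theorem horizon_slope_general
    (M : Matrix (Fin 3) (Fin 3) ℝ)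
    (hr31 : M 2 0 = 0) (hr32 : M 2 1 ≠ 0)
    (fx fy cx cy : ℝ)
    (K : Matrix (Fin 3) (Fin 3) ℝ)
    (hK : K = !![fx, 0, cx; 0, fy, cy; 0, 0, 1])
    (xv yv : ℝ) (hyv : yv ≠ 0)
    (vd v2 : Fin 2 → ℝ)
    (hvd : vd = dehom (K.mulVec (M.mulVec ![xv, yv, 0])))
    (hv2 : v2 = dehom (K.mulVec (M.mulVec ![(0 : ℝ), 1, 0]))) :
    fx * M 0 0 * (vd 1 - v2 1) = fy * M 1 0 * (vd 0 - v2 0) := by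
  have hdepth {x y : ℝ} (hy : y ≠ 0) : (M *ᵥ ![x, y, 0]) 2 ≠ 0 := by
    rw [mulVec_horizontal_two hr31]
    exact mul_ne_zero hr32 hy
  have hdiff := dehom_intrinsic_mulVec_sub fx fy cx cy (hdepth (x := xv) hyv)
    (hdepth (x := 0) one_ne_zero)
  rw [← hK, ← hvd, ← hv2] at hdiff
  have h0 := congrFun hdiff 0
  have h1 := congrFun hdiff 1
  simp only [Pi.sub_apply, cons_val_zero, cons_val_one,
    mulVec_horizontal_div_sub hr31 hr32 hyv] at h0 h1
  rw [h0, h1]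
  ring

/-- When `r₃₁ = 0` and `r₃₂ ≠ 0` (with `M = Rᵀ` for a rotation `R`), the dehomogenized
vanishing points of any horizontal direction `d = (x_v, y_v, 0)` (with `y_v ≠ 0`) and of
`e₂` satisfy `f_x r₁₁ ((v_d)₂ − (v₂)₂) = f_y r₂₁ ((v_d)₁ − (v₂)₁)`: the horizon line has
slope `(f_y/f_x)(r₂₁/r₁₁)`. -/
theorem horizon_slope
    (R : Matrix (Fin 3) (Fin 3) ℝ)
    (hR : Rᵀ * R = 1) (hdet : R.det = 1)
    (M : Matrix (Fin 3) (Fin 3) ℝ) (hM : M = Rᵀ)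
    (hr31 : M 2 0 = 0) (hr32 : M 2 1 ≠ 0)
    (fx fy cx cy : ℝ) (hfx : fx ≠ 0) (hfy : fy ≠ 0)
    (K : Matrix (Fin 3) (Fin 3) ℝ)
    (hK : K = !![fx, 0, cx; 0, fy, cy; 0, 0, 1])
    (xv yv : ℝ) (hyv : yv ≠ 0)
    (vd v2 : Fin 2 → ℝ)
    (hvd : vd = dehom (K.mulVec (M.mulVec ![xv, yv, 0])))
    (hv2 : v2 = dehom (K.mulVec (M.mulVec ![(0 : ℝ), 1, 0]))) :
    fx * M 0 0 * (vd 1 - v2 1) = fy * M 1 0 * (vd 0 - v2 0) :=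
  horizon_slope_general M hr31 hr32 fx fy cx cy K hK xv yv hyv vd v2 hvd hv2
end

section
/- Let n be a natural number, Q a real n×n orthogonal matrix (Qᵀ Q = I), and S a real n×n symmetric positive semidefinite matrix. Then tr(Q S) ≤ tr(S). -/
open Matrix

namespace Matrix

variable {ι R : Type*} [Fintype ι] [DecidableEq ι]

theorem trace_one_sub_mul_mul_one_sub_transpose [CommRing R] {Q S : Matrix ι ι R}
    (hQ : Qᵀ * Q = 1) (hS : Sᵀ = S) :
    ((1 - Q) * S * (1 - Q)ᵀ).trace = 2 * (S.trace - (Q * S).trace) := by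
  have h_cross : (S * Qᵀ).trace = (Q * S).trace := by
    rw [← trace_transpose, transpose_mul, transpose_transpose, hS]
  have h_conj : (Q * S * Qᵀ).trace = S.trace := by
    rw [trace_mul_comm, ← Matrix.mul_assoc, hQ, Matrix.one_mul]
  simp only [transpose_sub, transpose_one, sub_mul, mul_sub, one_mul, mul_one, trace_sub,
    h_cross, h_conj]
  ring

end Matrix

theorem trace_orthogonal_mul_posSemidef_le_general
    (n : ℕ) (Q S : Matrix (Fin n) (Fin n) ℝ)
    (hQ : Qᵀ * Q = 1) (hS : S.PosSemidef) :
    (Q * S).trace ≤ S.trace := by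
  have hS_symm : Sᵀ = S := by
    simpa only [conjTranspose_eq_transpose_of_trivial] using hS.isHermitian.eq
  have h_nonneg := (hS.mul_mul_conjTranspose_same (1 - Q)).trace_nonneg
  rw [conjTranspose_eq_transpose_of_trivial,
    trace_one_sub_mul_mul_one_sub_transpose hQ hS_symm] at h_nonneg
  linarith

/-- For an orthogonal matrix `Q` (`Qᵀ Q = I`) and a symmetric positive semidefinite
matrix `S`, one has `tr(Q S) ≤ tr(S)`. -/
theorem trace_orthogonal_mul_posSemidef_le
    (n : ℕ) (Q S : Matrix (Fin n) (Fin n) ℝ)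
    (hQ : Qᵀ * Q = 1) (hSsymm : Sᵀ = S) (hS : S.PosSemidef) :
    (Q * S).trace ≤ S.trace :=
  trace_orthogonal_mul_posSemidef_le_general n Q S hQ hS
end
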